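/- Let {E_i}_{i=1}^n be a POVM on ℂ^d and let (X_a)_{a=1}^{d²} be any family of Hermitian d×d complex matrices that is orthonormal with respect to the Hilbert–Schmidt inner product ⟨A,B⟩ = tr(AB). Then Σ_{a=1}^{d²} tr( (Σ_{l=1}^n √E_l · X_a · √E_l − X_a)² ) = Σ_{l,m=1}^n (tr(√E_l √E_m))² − 2 Σ_{l=1}^n (tr √E_l)² + d². In particular, the squared Frobenius norm of the difference between the Lüders channel of the POVM and the identity channel equals this trace expression, independently of the choice of orthonormal Hermitian basis. -/

import Mathlib

open Matrix BigOperators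
open scoped ComplexOrder

/-- The positive semidefinite square root, as `Matrix.PosSemidef.sqrt` was defined in Mathlib
of December 2024 (removed since). -/
noncomputable def Matrix.PosSemidef.sqrt {𝕜 : Type*} [RCLike 𝕜] {n : Type*} [Fintype n]
    [DecidableEq n] {A : Matrix n n 𝕜} (hA : A.PosSemidef) : Matrix n n 𝕜 :=
  hA.1.eigenvectorUnitary.1 * diagonal ((↑) ∘ Real.sqrt ∘ hA.1.eigenvalues) *
    (star hA.1.eigenvectorUnitary : Matrix n n 𝕜)

/-!
Expanding the square, every term becomes a sum over the basis of traces `tr (A X_a B X_a)`.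
A family of `d²` matrices orthonormal for `tr (A B)` is a basis of the matrix space, and expanding
the matrix units in it gives the completeness relation `∑_a X_a B X_a = tr B • 1`; hence
`∑_a tr (A X_a B X_a) = tr A * tr B`.
-/

namespace Matrix

variable {R m ι κ : Type*} [Field R] [Fintype m] [DecidableEq m] [Fintype ι] [DecidableEq ι]
  [Fintype κ]

/-- Orthonormality for the bilinear form `tr (A B)`, the Hilbert–Schmidt inner product on
Hermitian matrices. -/
def TraceOrthonormal (X : ι → Matrix m m R) : Prop :=
  ∀ a b, (X a * X b).trace = if a = b then 1 else 0

namespace TraceOrthonormal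

variable {X : ι → Matrix m m R}

theorem linearIndependent (hX : TraceOrthonormal X) : LinearIndependent R X := by
  rw [Fintype.linearIndependent_iff]
  intro c hc b
  simpa [Finset.sum_mul, trace_sum, hX _ b] using congrArg (fun M => (M * X b).trace) hc

theorem sum_trace_mul_smul_eq_self (hX : TraceOrthonormal X)
    (hcard : Fintype.card ι = Fintype.card m ^ 2) (M : Matrix m m R) :
    ∑ a, (M * X a).trace • X a = M := by
  let B := basisOfLinearIndependentOfCardEqFinrank' X hX.linearIndependent
    (by simp [hcard, sq, Module.finrank_matrix])
  have hB : ⇑B = X := coe_basisOfLinearIndependentOfCardEqFinrank' ..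
  have hrepr : ∀ b, (M * X b).trace = B.repr M b := by
    intro b
    conv_lhs => rw [← B.sum_repr M]
    simp [hB, Finset.sum_mul, trace_sum, hX _ b]
  simpa [hrepr, hB] using B.sum_repr M

theorem sum_apply_mul_apply_eq_single (hX : TraceOrthonormal X)
    (hcard : Fintype.card ι = Fintype.card m ^ 2) (p q l i : m) :
    ∑ a, X a q p * X a l i = single p q (1 : R) l i := by
  conv_rhs => rw [← hX.sum_trace_mul_smul_eq_self hcard (single p q 1)]
  simp [sum_apply, trace_single_mul]

theorem sum_mul_mul_eq_trace_smul_one (hX : TraceOrthonormal X)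
    (hcard : Fintype.card ι = Fintype.card m ^ 2) (B : Matrix m m R) :
    ∑ a, X a * B * X a = B.trace • 1 := by
  ext k i
  calc (∑ a, X a * B * X a) k i = ∑ j, ∑ l, B j l * ∑ a, X a k j * X a l i := by
        simp only [sum_apply, mul_apply, Finset.sum_mul, Finset.mul_sum]
        conv_rhs => rw [Finset.sum_comm]
        rw [Finset.sum_comm]
        refine Finset.sum_congr rfl fun l _ => ?_
        rw [Finset.sum_comm]
        refine Finset.sum_congr rfl fun j _ => Finset.sum_congr rfl fun a _ => ?_
        ring
    _ = (B.trace • (1 : Matrix m m R)) k i := by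
        by_cases hki : k = i <;>
          simp [hX.sum_apply_mul_apply_eq_single hcard, single_apply, trace, hki]

theorem sum_trace_mul_mul_mul_mul (hX : TraceOrthonormal X)
    (hcard : Fintype.card ι = Fintype.card m ^ 2) (A B : Matrix m m R) :
    ∑ a, (A * X a * B * X a).trace = A.trace * B.trace := by
  calc ∑ a, (A * X a * B * X a).trace = (A * ∑ a, X a * B * X a).trace := by
        simp only [Matrix.mul_sum, trace_sum, Matrix.mul_assoc]
    _ = A.trace * B.trace := by
        rw [hX.sum_mul_mul_eq_trace_smul_one hcard, Matrix.mul_smul, Matrix.mul_one, trace_smul,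
          smul_eq_mul, mul_comm]

theorem sum_trace_sq_sum_mul_mul_sub (hX : TraceOrthonormal X)
    (hcard : Fintype.card ι = Fintype.card m ^ 2) (S : κ → Matrix m m R) :
    ∑ a, ((∑ l, S l * X a * S l - X a) ^ 2).trace
      = ∑ l, ∑ l', (S l * S l').trace ^ 2 - 2 * ∑ l, (S l).trace ^ 2
        + (Fintype.card m : R) ^ 2 := by
  have hsq : ∀ a, ((∑ l, S l * X a * S l - X a) ^ 2).trace
      = ∑ l, ∑ l', (S l * X a * S l * (S l' * X a * S l')).trace
        - 2 * ∑ l, (S l * X a * S l * X a).trace + (X a * X a).trace := by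
    intro a
    rw [sq, sub_mul, mul_sub, mul_sub, trace_sub, trace_sub, trace_sub, trace_mul_comm (X a),
      Finset.sum_mul_sum, Finset.sum_mul]
    simp only [trace_sum]
    ring
  have hquadratic : ∑ a, ∑ l, ∑ l', (S l * X a * S l * (S l' * X a * S l')).trace
      = ∑ l, ∑ l', (S l * S l').trace ^ 2 := by
    rw [Finset.sum_comm]
    refine Finset.sum_congr rfl fun l _ => ?_
    rw [Finset.sum_comm]
    refine Finset.sum_congr rfl fun l' _ => ?_
    calc ∑ a, (S l * X a * S l * (S l' * X a * S l')).trace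
        = ∑ a, (S l' * S l * X a * (S l * S l') * X a).trace := by
          refine Finset.sum_congr rfl fun a _ => ?_
          simp only [Matrix.mul_assoc]
          rw [trace_mul_comm (S l')]
          simp only [Matrix.mul_assoc]
      _ = (S l * S l').trace ^ 2 := by
          rw [hX.sum_trace_mul_mul_mul_mul hcard, trace_mul_comm (S l'), sq]
  have hcross : ∑ a, ∑ l, (S l * X a * S l * X a).trace = ∑ l, (S l).trace ^ 2 := by
    rw [Finset.sum_comm]
    simp only [hX.sum_trace_mul_mul_mul_mul hcard, sq]
  have hnorm : ∑ a, (X a * X a).trace = (Fintype.card m : R) ^ 2 := by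
    simp [hX _ _, hcard]
  simp only [hsq, Finset.sum_add_distrib, Finset.sum_sub_distrib, ← Finset.mul_sum, hquadratic,
    hcross, hnorm]

end TraceOrthonormal

end Matrix

theorem luders_channel_frobenius_distance_general
    (d n : ℕ) (E : Fin n → Matrix (Fin d) (Fin d) ℂ)
    (hE : ∀ i, (E i).PosSemidef)
    (X : Fin (d ^ 2) → Matrix (Fin d) (Fin d) ℂ)
    (hXortho : ∀ a b, (X a * X b).trace = if a = b then 1 else 0) :
    ∑ a, ((∑ l, (hE l).sqrt * X a * (hE l).sqrt - X a) ^ 2).trace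
      = ∑ l, ∑ m, ((hE l).sqrt * (hE m).sqrt).trace ^ 2
        - 2 * ∑ l, ((hE l).sqrt).trace ^ 2 + (d : ℂ) ^ 2 := by
  simpa using TraceOrthonormal.sum_trace_sq_sum_mul_mul_sub (X := X) hXortho (by simp)
    fun l => (hE l).sqrt

/-- For a POVM `{E_i}` on `ℂ^d` and any family `(X_a)_{a=1}^{d²}` of Hermitian
matrices orthonormal w.r.t. the Hilbert–Schmidt inner product `tr(AB)`, the squared Frobenius
norm of the difference between the Lüders channel and the identity channel equals
`Σ_{l,m} (tr(√E_l √E_m))² − 2 Σ_l (tr √E_l)² + d²`. -/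
theorem luders_channel_frobenius_distance
    (d n : ℕ) (E : Fin n → Matrix (Fin d) (Fin d) ℂ)
    (hE : ∀ i, (E i).PosSemidef)
    (hsum : ∑ i, E i = 1)
    (X : Fin (d ^ 2) → Matrix (Fin d) (Fin d) ℂ)
    (hXherm : ∀ a, (X a).IsHermitian)
    (hXortho : ∀ a b, (X a * X b).trace = if a = b then 1 else 0) :
    ∑ a, ((∑ l, (hE l).sqrt * X a * (hE l).sqrt - X a) ^ 2).trace
      = ∑ l, ∑ m, ((hE l).sqrt * (hE m).sqrt).trace ^ 2
        - 2 * ∑ l, ((hE l).sqrt).trace ^ 2 + (d : ℂ) ^ 2 :=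
  luders_channel_frobenius_distance_general d n E hE X hXortho
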